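/- arXiv:2511.07174 — 6 statements merged into one kernel-verified Lean document; each statement's English description precedes it below -/
import Mathlib

section
/- Let p be a complex polynomial of degree d ≥ 1 with distinct roots λ_1, …, λ_d, and let δ_k be the associated Lagrange basis polynomials. Then for all λ, z ∈ ℂ one has the identity p(λ) − p(z) = (λ − z) · Σ_{k=1}^d p'(λ_k) δ_k(λ) δ_k(z). In particular, for λ ≠ z with p(λ) ≠ p(z), 1/(λ − z) = (1/(p(λ) − p(z))) Σ_{k=1}^d p'(λ_k) δ_k(λ) δ_k(z). -/
open Polynomial

/-- Decomposition of the Cauchy kernel: for a polynomial `p` of degree `d ≥ 1`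
with distinct roots `lam k` and Lagrange basis polynomials `δ k`,
`p(λ) − p(z) = (λ − z) · Σ_k p'(λ_k) δ_k(λ) δ_k(z)`, and consequently
`1/(λ − z) = (1/(p(λ) − p(z))) Σ_k p'(λ_k) δ_k(λ) δ_k(z)` whenever `λ ≠ z`,
`p(λ) ≠ p(z)`. -/
theorem stmt0 (d : ℕ) (hd : 1 ≤ d) (c : ℂ) (hc : c ≠ 0)
    (lam : Fin d → ℂ) (hlam : Function.Injective lam)
    (p : ℂ[X]) (hp : p = C c * ∏ k : Fin d, (X - C (lam k)))
    (δ : Fin d → ℂ[X])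
    (hδdeg : ∀ k, (δ k).degree < (d : ℕ))
    (hδval : ∀ k j, (δ k).eval (lam j) = if k = j then 1 else 0) :
    (∀ lm z : ℂ,
      p.eval lm - p.eval z =
        (lm - z) * ∑ k : Fin d,
          (Polynomial.derivative p).eval (lam k) * (δ k).eval lm * (δ k).eval z) ∧
    (∀ lm z : ℂ, lm ≠ z → p.eval lm ≠ p.eval z →
      1 / (lm - z) =
        (1 / (p.eval lm - p.eval z)) * ∑ k : Fin d,
          (Polynomial.derivative p).eval (lam k) * (δ k).eval lm * (δ k).eval z) := by
  classical
  haveI : NeZero d := ⟨Nat.one_le_iff_ne_zero.mp hd⟩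
  have injOn : Set.InjOn lam ↑(Finset.univ : Finset (Fin d)) := hlam.injOn
  have hcard : ((Finset.univ : Finset (Fin d)).card : WithBot ℕ) = (d : ℕ) := by
    simp
  -- δ is the Lagrange basis
  have hδeq : ∀ k, δ k = Lagrange.basis Finset.univ lam k := by
    intro k
    refine Polynomial.eq_of_degrees_lt_of_eval_index_eq Finset.univ injOn ?_ ?_ ?_
    · rw [hcard]; exact hδdeg k
    · rw [Lagrange.degree_basis injOn (Finset.mem_univ k)]
      simp only [Finset.card_univ, Fintype.card_fin]
      exact_mod_cast Nat.sub_lt (Nat.lt_of_lt_of_le Nat.zero_lt_one hd) Nat.zero_lt_one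
    · intro j _
      rw [hδval k j]
      by_cases h : k = j
      · subst h; rw [Lagrange.eval_basis_self injOn (Finset.mem_univ k), if_pos rfl]
      · rw [Lagrange.eval_basis_of_ne h (Finset.mem_univ j), if_neg h]
  -- explicit evaluation of δ
  have hδev : ∀ k (z : ℂ), (δ k).eval z =
      ∏ i ∈ Finset.univ.erase k, ((lam k - lam i)⁻¹ * (z - lam i)) := by
    intro k z
    rw [hδeq k, Lagrange.basis, eval_prod]
    refine Finset.prod_congr rfl fun i _ => ?_
    simp [Lagrange.basisDivisor]
  -- derivative of p at roots
  have hder : ∀ j, (Polynomial.derivative p).eval (lam j) =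
      c * ∏ i ∈ Finset.univ.erase j, (lam j - lam i) := by
    intro j
    have hp' : p = C c * ((X - C (lam j)) * ∏ i ∈ Finset.univ.erase j, (X - C (lam i))) := by
      rw [hp]; congr 1; exact (Finset.mul_prod_erase _ _ (Finset.mem_univ j)).symm
    rw [hp', derivative_C_mul, derivative_mul, derivative_sub, derivative_X, derivative_C]
    simp [eval_prod]
  -- key identity
  have key : ∀ j (z : ℂ), p.eval z =
      (z - lam j) * ((Polynomial.derivative p).eval (lam j) * (δ j).eval z) := by
    intro j z
    have hprod : ∏ i ∈ Finset.univ.erase j,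
        ((lam j - lam i) * ((lam j - lam i)⁻¹ * (z - lam i))) =
        ∏ i ∈ Finset.univ.erase j, (z - lam i) := by
      refine Finset.prod_congr rfl fun i hi => ?_
      have hne : lam j - lam i ≠ 0 := by
        have : i ≠ j := (Finset.mem_erase.mp hi).1
        exact sub_ne_zero.mpr fun h => this (hlam h).symm
      rw [← mul_assoc, mul_inv_cancel₀ hne, one_mul]
    rw [hder j, hδev j, hp, eval_mul, eval_C, eval_prod]
    simp only [eval_sub, eval_X, eval_C]
    rw [← Finset.mul_prod_erase (Finset.univ) (fun i => z - lam i) (Finset.mem_univ j),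
      ← hprod, Finset.prod_mul_distrib]
    ring
  -- sum of Lagrange basis evaluations is 1
  have hsum : ∀ z : ℂ, ∑ k : Fin d, (δ k).eval z = 1 := by
    intro z
    have h1 : ∑ k : Fin d, Lagrange.basis Finset.univ lam k = 1 :=
      Lagrange.sum_basis injOn Finset.univ_nonempty
    calc ∑ k : Fin d, (δ k).eval z
        = (∑ k : Fin d, Lagrange.basis Finset.univ lam k).eval z := by
          rw [eval_finset_sum]; exact Finset.sum_congr rfl fun k _ => by rw [hδeq k]
      _ = 1 := by rw [h1, eval_one]
  have main : ∀ lm z : ℂ,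
      p.eval lm - p.eval z =
        (lm - z) * ∑ k : Fin d,
          (Polynomial.derivative p).eval (lam k) * (δ k).eval lm * (δ k).eval z := by
    intro lm z
    have : (lm - z) * ∑ k : Fin d,
        (Polynomial.derivative p).eval (lam k) * (δ k).eval lm * (δ k).eval z =
        ∑ k : Fin d, (p.eval lm * (δ k).eval z - p.eval z * (δ k).eval lm) := by
      rw [Finset.mul_sum]
      refine Finset.sum_congr rfl fun k _ => ?_
      have h1 := key k lm
      have h2 := key k z
      linear_combination -((δ k).eval z) * h1 + (δ k).eval lm * h2
    rw [this, Finset.sum_sub_distrib, ← Finset.mul_sum, ← Finset.mul_sum, hsum, hsum,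
      mul_one, mul_one]
  refine ⟨main, fun lm z hne hpe => ?_⟩
  have h := main lm z
  have hlz : lm - z ≠ 0 := sub_ne_zero.mpr hne
  have hpp : p.eval lm - p.eval z ≠ 0 := sub_ne_zero.mpr hpe
  field_simp
  linear_combination h
end

section
/- Let p be a complex polynomial of degree d ≥ 1 with distinct roots λ_1, …, λ_d, δ_k the Lagrange basis polynomials, and let f_1, …, f_d : ℂ → ℂ be arbitrary functions. Define φ(z) = Σ_{j=1}^d δ_j(z) f_j(p(z)). Then for every z ∈ ℂ, z · φ(z) = Σ_{j=1}^d δ_j(z) g_j(p(z)), where g_j(w) = λ_j f_j(w) + w · Σ_{l=1}^d f_l(w)/p'(λ_l). (This is the recursion used to compute the multicentric representation of z^{k+1} from that of z^k.) -/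
open Polynomial

/-- The recursion producing the multicentric representation of `z·φ(z)` from that
of `φ(z)`: if `φ(z) = Σ_j δ_j(z) f_j(p(z))`, then
`z·φ(z) = Σ_j δ_j(z) g_j(p(z))` with `g_j(w) = λ_j f_j(w) + w Σ_l f_l(w)/p'(λ_l)`. -/
theorem stmt2 (d : ℕ) (hd : 1 ≤ d) (c : ℂ) (hc : c ≠ 0)
    (lam : Fin d → ℂ) (hlam : Function.Injective lam)
    (p : ℂ[X]) (hp : p = C c * ∏ k : Fin d, (X - C (lam k)))
    (δ : Fin d → ℂ[X])
    (hδdeg : ∀ k, (δ k).degree < (d : ℕ))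
    (hδval : ∀ k j, (δ k).eval (lam j) = if k = j then 1 else 0)
    (f : Fin d → ℂ → ℂ) :
    ∀ z : ℂ,
      z * ∑ j : Fin d, (δ j).eval z * f j (p.eval z) =
        ∑ j : Fin d, (δ j).eval z *
          (lam j * f j (p.eval z) +
            p.eval z * ∑ l : Fin d,
              f l (p.eval z) / (Polynomial.derivative p).eval (lam l)) := by
  intro z
  haveI : NeZero d := ⟨by omega⟩
  have hvs : Set.InjOn lam (Finset.univ : Finset (Fin d)) := hlam.injOn
  have hcard : (Finset.univ : Finset (Fin d)).card = d := Finset.card_univ.trans (Fintype.card_fin d)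
  -- identify δ with the Lagrange basis
  have hδ : ∀ j, δ j = Lagrange.basis Finset.univ lam j := by
    intro j
    apply Polynomial.eq_of_degrees_lt_of_eval_index_eq (v := lam) Finset.univ hvs
    · rw [hcard]; exact hδdeg j
    · rw [Lagrange.degree_basis hvs (Finset.mem_univ j)]
      exact_mod_cast Nat.sub_lt (by rw [hcard]; omega) one_pos
    · intro i _
      rw [hδval j i]
      by_cases h : j = i
      · subst h; simp [Lagrange.eval_basis_self hvs (Finset.mem_univ j)]
      · simp [h, Lagrange.eval_basis_of_ne h (Finset.mem_univ i)]
  set nod : ℂ[X] := Lagrange.nodal Finset.univ lam with hnod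
  have hpnod : p = C c * nod := hp
  -- derivative of p at nodes
  have hw : ∀ j : Fin d, (Polynomial.derivative p).eval (lam j)
      = c * (Lagrange.nodalWeight Finset.univ lam j)⁻¹ := by
    intro j
    rw [hpnod, derivative_mul, derivative_C, zero_mul, zero_add, eval_mul, eval_C,
      Lagrange.nodalWeight_eq_eval_derivative_nodal (Finset.mem_univ j), inv_inv]
  have hwne : ∀ j : Fin d, Lagrange.nodalWeight Finset.univ lam j ≠ 0 := fun j =>
    Lagrange.nodalWeight_ne_zero hvs (Finset.mem_univ j)
  -- key identity: z * δ_j(z) = lam j * δ_j(z) + p(z)/p'(lam j)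
  have key : ∀ j : Fin d, z * (δ j).eval z
      = lam j * (δ j).eval z + p.eval z / (Polynomial.derivative p).eval (lam j) := by
    intro j
    have hb : (X - C (lam j)) * δ j = C (Lagrange.nodalWeight Finset.univ lam j) * nod := by
      rw [hδ j, Lagrange.basis_eq_prod_sub_inv_mul_nodal_div (Finset.mem_univ j),
        ← Lagrange.nodal_erase_eq_nodal_div (Finset.mem_univ j), hnod,
        Lagrange.nodal_eq_mul_nodal_erase (Finset.mem_univ j)]
      ring
    have hbz := congrArg (Polynomial.eval z) hb
    simp only [eval_mul, eval_sub, eval_X, eval_C] at hbz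
    have : p.eval z / (Polynomial.derivative p).eval (lam j)
        = Lagrange.nodalWeight Finset.univ lam j * nod.eval z := by
      rw [hw j, hpnod, eval_mul, eval_C]
      field_simp
    rw [this, ← hbz]; ring
  -- sum of basis is 1
  have hsum1 : ∑ j : Fin d, (δ j).eval z = 1 := by
    have := Lagrange.sum_basis hvs (Finset.univ_nonempty (α := Fin d))
    have := congrArg (Polynomial.eval z) this
    simp only [eval_finset_sum, eval_one] at this
    calc ∑ j : Fin d, (δ j).eval z = ∑ j : Fin d, (Lagrange.basis Finset.univ lam j).eval z := by
          exact Finset.sum_congr rfl fun j _ => by rw [hδ j]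
      _ = 1 := this
  -- final algebra
  rw [Finset.mul_sum]
  have lhs_eq : ∀ j : Fin d, z * ((δ j).eval z * f j (p.eval z))
      = lam j * (δ j).eval z * f j (p.eval z)
        + (p.eval z / (Polynomial.derivative p).eval (lam j)) * f j (p.eval z) := by
    intro j
    rw [← mul_assoc, key j]; ring
  rw [Finset.sum_congr rfl fun j _ => lhs_eq j, Finset.sum_add_distrib]
  have rhs_eq : ∑ j : Fin d, (δ j).eval z *
        (lam j * f j (p.eval z) +
          p.eval z * ∑ l : Fin d, f l (p.eval z) / (Polynomial.derivative p).eval (lam l))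
      = (∑ j : Fin d, lam j * (δ j).eval z * f j (p.eval z))
        + (∑ j : Fin d, (δ j).eval z)
          * (p.eval z * ∑ l : Fin d, f l (p.eval z) / (Polynomial.derivative p).eval (lam l)) := by
    rw [Finset.sum_mul]
    rw [← Finset.sum_add_distrib]
    exact Finset.sum_congr rfl fun j _ => by ring
  rw [rhs_eq, hsum1, one_mul, Finset.mul_sum]
  congr 1
  exact Finset.sum_congr rfl fun j _ => by ring
end

section
/- Let p be a complex polynomial of degree d ≥ 1 with distinct roots λ_1, …, λ_d, δ_k the Lagrange basis polynomials, and n ≥ 0. Then for every polynomial P ∈ ℂ[X] of degree at most d(n+1) − 1 there exist unique polynomials q_1, …, q_d ∈ ℂ[X], each of degree at most n, such that P(z) = Σ_{k=1}^d δ_k(z) q_k(p(z)) for all z ∈ ℂ. -/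
open Polynomial Finset


/-- A polynomial of degree < d vanishing at d distinct points is zero. -/
lemma vanish_aux {d : ℕ} (lam : Fin d → ℂ) (hlam : Function.Injective lam)
    (g : ℂ[X]) (hg : g.degree < (d : ℕ)) (hz : ∀ j, g.eval (lam j) = 0) : g = 0 := by
  by_cases h0 : g = 0
  · exact h0
  · exact eq_zero_of_natDegree_lt_card_of_eval_eq_zero g hlam hz
      (by simpa [Fintype.card_fin] using (natDegree_lt_iff_degree_lt h0).2 hg)

/-- Existence of the p-adic expansion. -/
lemma adic_ex (q : ℂ[X]) (hq : q.Monic) (hq0 : 0 < q.natDegree) :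
    ∀ (n : ℕ) (P : ℂ[X]), P.degree < (q.natDegree * (n + 1) : ℕ) →
      ∃ r : ℕ → ℂ[X], (∀ i, (r i).degree < (q.natDegree : ℕ)) ∧
        P = ∑ i ∈ range (n + 1), r i * q ^ i := by
  intro n
  induction n with
  | zero =>
    intro P hP
    have hP' : P.degree < (q.natDegree : WithBot ℕ) := by simpa using hP
    refine ⟨fun i => if i = 0 then P else 0, fun i => ?_, by simp⟩
    by_cases hi : i = 0
    · simpa [hi] using hP'
    · simp only [hi, ite_false, degree_zero]
      exact WithBot.bot_lt_coe _
  | succ n ih =>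
    intro P hP
    have hdiv : (P /ₘ q).degree < (q.natDegree * (n + 1) : ℕ) := by
      by_cases h0 : P /ₘ q = 0
      · rw [h0, degree_zero]
        exact WithBot.bot_lt_coe _
      · have hP0 : P ≠ 0 := by
          intro h; rw [h, zero_divByMonic] at h0; exact h0 rfl
        have h1 : P.natDegree < q.natDegree * (n + 1 + 1) :=
          (natDegree_lt_iff_degree_lt hP0).2 hP
        rw [← natDegree_lt_iff_degree_lt h0, natDegree_divByMonic P hq]
        have h2 : q.natDegree * (n + 1 + 1) = q.natDegree * (n + 1) + q.natDegree :=
          by ring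
        rw [h2] at h1
        have h4 : 0 < q.natDegree * (n + 1) := Nat.mul_pos hq0 (Nat.succ_pos n)
        omega
    obtain ⟨r', hr'deg, hr'⟩ := ih (P /ₘ q) hdiv
    refine ⟨fun i => if i = 0 then P %ₘ q else r' (i - 1), fun i => ?_, ?_⟩
    · by_cases hi : i = 0
      · have h5 := degree_modByMonic_lt P hq
        rw [degree_eq_natDegree hq.ne_zero] at h5
        simpa [hi] using h5
      · simpa [hi] using hr'deg (i - 1)
    · rw [Finset.sum_range_succ']
      have h3 : ∀ i ∈ range (n + 1),
          (if i + 1 = 0 then P %ₘ q else r' (i + 1 - 1)) * q ^ (i + 1)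
          = q * (r' i * q ^ i) := fun i _ => by
        simp only [Nat.succ_ne_zero, if_neg, ite_false, Nat.add_sub_cancel]; ring
      rw [Finset.sum_congr rfl h3, ← Finset.mul_sum, ← hr']
      simp only [↓reduceIte, pow_zero, mul_one]
      rw [add_comm, modByMonic_add_div P q]

/-- Uniqueness of the p-adic expansion. -/
lemma adic_zero (q : ℂ[X]) (hq : q.Monic) :
    ∀ (m : ℕ) (r : ℕ → ℂ[X]), (∀ i, (r i).degree < q.degree) →
      ∑ i ∈ range m, r i * q ^ i = 0 → ∀ i < m, r i = 0 := by
  intro m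
  induction m with
  | zero => intro r _ _ i hi; omega
  | succ m ih =>
    intro r hdeg hsum i hi
    rw [Finset.sum_range_succ'] at hsum
    set T : ℂ[X] := ∑ i ∈ range m, r (i + 1) * q ^ i with hT
    have hsum' : q * T + r 0 = 0 := by
      rw [← hsum, Finset.mul_sum]
      congr 1
      · exact Finset.sum_congr rfl fun k _ => by ring
      · rw [pow_zero, mul_one]
    have hT0 : T = 0 := by
      by_contra hT0
      have h1 : (r 0).degree = (q * T).degree := by
        have : r 0 = -(q * T) := by linear_combination (norm := ring_nf) hsum'
        rw [this, degree_neg]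
      rw [degree_mul] at h1
      have h2 : q.degree ≤ q.degree + T.degree := by
        conv_lhs => rw [← add_zero q.degree]
        exact add_le_add_right (by simpa [Polynomial.degree_eq_bot] using
          (zero_le_degree_iff.2 hT0)) _
      exact absurd (hdeg 0) (by rw [h1]; exact not_lt.2 h2)
    have hr0 : r 0 = 0 := by
      rw [hT0, mul_zero, zero_add] at hsum'; exact hsum'
    rcases Nat.eq_zero_or_pos i with hi0 | hi0
    · rw [hi0]; exact hr0
    · have := ih (fun j => r (j + 1)) (fun j => hdeg (j + 1)) (by rw [hT0] at hT; exact hT.symm) (i - 1) (by omega)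
      simpa [Nat.sub_add_cancel hi0] using this

lemma degree_C_mul_le' (a : ℂ) (g : ℂ[X]) : (C a * g).degree ≤ g.degree :=
  (degree_mul_le _ _).trans (by
    calc (C a).degree + g.degree ≤ 0 + g.degree := add_le_add_left degree_C_le _
    _ = g.degree := zero_add _)

lemma degree_mul_C_le' (a : ℂ) (g : ℂ[X]) : (g * C a).degree ≤ g.degree := by
  rw [mul_comm]; exact degree_C_mul_le' a g

/-- Truncated multicentric representation of polynomials: every polynomial `P` of
degree at most `d(n+1) − 1` can be uniquely written as
`P(z) = Σ_k δ_k(z) q_k(p(z))` with `deg q_k ≤ n`. -/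
theorem stmt5 (d : ℕ) (hd : 1 ≤ d) (c : ℂ) (hc : c ≠ 0)
    (lam : Fin d → ℂ) (hlam : Function.Injective lam)
    (p : ℂ[X]) (hp : p = C c * ∏ k : Fin d, (X - C (lam k)))
    (δ : Fin d → ℂ[X])
    (hδdeg : ∀ k, (δ k).degree < (d : ℕ))
    (hδval : ∀ k j, (δ k).eval (lam j) = if k = j then 1 else 0)
    (n : ℕ) (P : ℂ[X]) (hP : P.degree < (d * (n + 1) : ℕ)) :
    ∃! q : Fin d → ℂ[X],
      (∀ k, (q k).degree ≤ (n : ℕ)) ∧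
      ∀ z : ℂ, P.eval z = ∑ k : Fin d, (δ k).eval z * (q k).eval (p.eval z) := by
  classical
  set p' : ℂ[X] := ∏ k : Fin d, (X - C (lam k)) with hp'
  have hmonic : p'.Monic := monic_prod_of_monic _ _ fun k _ => monic_X_sub_C _
  have hdeg' : p'.natDegree = d := by
    rw [hp', natDegree_prod _ _ fun k _ => X_sub_C_ne_zero _]
    simp
  have hdpos : 0 < p'.natDegree := by rw [hdeg']; omega
  -- sums of C a * δ k have degree < d
  have hsumdeg : ∀ a : Fin d → ℂ, (∑ k : Fin d, C (a k) * δ k).degree < (d : ℕ) := by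
    intro a
    refine lt_of_le_of_lt (degree_sum_le _ _) ?_
    refine (Finset.sup_lt_iff (WithBot.bot_lt_coe _)).2 fun k _ => ?_
    exact lt_of_le_of_lt (degree_C_mul_le' _ _) (hδdeg k)
  -- Lagrange interpolation for degree < d
  have interp : ∀ g : ℂ[X], g.degree < (d : ℕ) →
      g = ∑ k : Fin d, C (g.eval (lam k)) * δ k := by
    intro g hg
    have hdiff : g - ∑ k : Fin d, C (g.eval (lam k)) * δ k = 0 := by
      apply vanish_aux lam hlam
      · exact lt_of_le_of_lt (degree_sub_le _ _) (max_lt hg (hsumdeg _))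
      · intro j
        simp [eval_finset_sum, hδval, Finset.sum_ite_eq']
    exact (sub_eq_zero.mp hdiff)
  -- existence construction
  obtain ⟨r', hr'deg, hr'⟩ := adic_ex p' hmonic hdpos n P (by rwa [hdeg'])
  set r : ℕ → ℂ[X] := fun i => C ((c ^ i)⁻¹) * r' i with hrdef
  have hrdeg : ∀ i, (r i).degree < (d : ℕ) := fun i =>
    lt_of_le_of_lt (degree_C_mul_le' _ _) (by rw [← hdeg']; exact hr'deg i)
  have hpz : ∀ z, p.eval z = c * p'.eval z := fun z => by rw [hp]; simp
  have hPsum : ∀ z, P.eval z = ∑ i ∈ Finset.range (n + 1), (r i).eval z * (p.eval z) ^ i := by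
    intro z
    rw [hr', eval_finset_sum]
    refine Finset.sum_congr rfl fun i _ => ?_
    rw [eval_mul, eval_pow, hrdef]
    simp only [eval_mul, eval_C, hpz z, mul_pow]
    field_simp
  set q0 : Fin d → ℂ[X] := fun k => ∑ i ∈ Finset.range (n + 1), C ((r i).eval (lam k)) * X ^ i
    with hq0def
  have hq0deg : ∀ k, (q0 k).degree ≤ (n : ℕ) := by
    intro k
    refine (degree_sum_le _ _).trans (Finset.sup_le fun i hi => ?_)
    exact (degree_C_mul_X_pow_le i _).trans
      (by exact_mod_cast Nat.cast_le.mpr (Finset.mem_range_succ_iff.mp hi))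
  have hq0eval : ∀ k w, (q0 k).eval w
      = ∑ i ∈ Finset.range (n + 1), (r i).eval (lam k) * w ^ i := by
    intro k w
    rw [hq0def]
    simp [eval_finset_sum]
  have hmain : ∀ z, ∑ k : Fin d, (δ k).eval z * (q0 k).eval (p.eval z) = P.eval z := by
    intro z
    rw [hPsum z]
    calc ∑ k : Fin d, (δ k).eval z * (q0 k).eval (p.eval z)
        = ∑ k : Fin d, ∑ i ∈ Finset.range (n + 1),
            (r i).eval (lam k) * (δ k).eval z * (p.eval z) ^ i := by
          refine Finset.sum_congr rfl fun k _ => ?_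
          rw [hq0eval, Finset.mul_sum]
          exact Finset.sum_congr rfl fun i _ => by ring
      _ = ∑ i ∈ Finset.range (n + 1), ∑ k : Fin d,
            (r i).eval (lam k) * (δ k).eval z * (p.eval z) ^ i := Finset.sum_comm
      _ = ∑ i ∈ Finset.range (n + 1), (r i).eval z * (p.eval z) ^ i := by
          refine Finset.sum_congr rfl fun i _ => ?_
          rw [← Finset.sum_mul]
          congr 1
          conv_rhs => rw [interp (r i) (hrdeg i)]
          rw [eval_finset_sum]
          exact Finset.sum_congr rfl fun k _ => by simp
  -- uniqueness
  have uniq : ∀ q1 q2 : Fin d → ℂ[X], (∀ k, (q1 k).degree ≤ (n : ℕ)) →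
      (∀ k, (q2 k).degree ≤ (n : ℕ)) →
      (∀ z, ∑ k : Fin d, (δ k).eval z * (q1 k).eval (p.eval z)
          = ∑ k : Fin d, (δ k).eval z * (q2 k).eval (p.eval z)) → q1 = q2 := by
    intro q1 q2 h1 h2 heq
    set s : Fin d → ℂ[X] := fun k => q1 k - q2 k with hsdef
    have hsdeg : ∀ k, (s k).natDegree < n + 1 := fun k =>
      Nat.lt_succ_of_le (natDegree_le_iff_degree_le.2
        ((degree_sub_le _ _).trans (max_le (h1 k) (h2 k))))
    set R : ℕ → ℂ[X] := fun i => ∑ k : Fin d, C ((s k).coeff i) * δ k with hRdef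
    have hF : ∑ i ∈ Finset.range (n + 1), R i * p ^ i = 0 := by
      apply Polynomial.funext
      intro z
      rw [eval_finset_sum, eval_zero]
      calc ∑ i ∈ Finset.range (n + 1), (R i * p ^ i).eval z
          = ∑ i ∈ Finset.range (n + 1), ∑ k : Fin d,
              (s k).coeff i * ((δ k).eval z * (p.eval z) ^ i) := by
            refine Finset.sum_congr rfl fun i _ => ?_
            rw [eval_mul, eval_pow, hRdef, eval_finset_sum, Finset.sum_mul]
            exact Finset.sum_congr rfl fun k _ => by simp; ring
        _ = ∑ k : Fin d, ∑ i ∈ Finset.range (n + 1),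
              (s k).coeff i * ((δ k).eval z * (p.eval z) ^ i) := Finset.sum_comm
        _ = ∑ k : Fin d, (δ k).eval z * (s k).eval (p.eval z) := by
            refine Finset.sum_congr rfl fun k _ => ?_
            rw [eval_eq_sum_range' (hsdeg k), Finset.mul_sum]
            exact Finset.sum_congr rfl fun i _ => by ring
        _ = 0 := by
            have : ∀ k : Fin d, (s k).eval (p.eval z)
                = (q1 k).eval (p.eval z) - (q2 k).eval (p.eval z) := fun k => by
              rw [hsdef]; simp
            simp only [this, mul_sub, Finset.sum_sub_distrib]
            rw [heq z, sub_self]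
    have hF' : ∑ i ∈ Finset.range (n + 1), (R i * C (c ^ i)) * p' ^ i = 0 := by
      rw [← hF]
      refine Finset.sum_congr rfl fun i _ => ?_
      rw [hp, mul_pow, ← C_pow]
      ring
    have hR0 : ∀ i, i < n + 1 → R i * C (c ^ i) = 0 := by
      refine adic_zero p' hmonic (n + 1) _ (fun i => ?_) hF'
      rw [degree_eq_natDegree hmonic.ne_zero, hdeg']
      exact lt_of_le_of_lt (degree_mul_C_le' _ _) (hsumdeg _)
    have hRzero : ∀ i, i < n + 1 → R i = 0 := fun i hi =>
      (mul_eq_zero.mp (hR0 i hi)).resolve_right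
        (by simpa [C_eq_zero] using pow_ne_zero i hc)
    have hscoeff : ∀ k i, (s k).coeff i = 0 := by
      intro k i
      rcases lt_or_ge i (n + 1) with hi | hi
      · have := congrArg (Polynomial.eval (lam k)) (hRzero i hi)
        rw [hRdef] at this
        simpa [eval_finset_sum, hδval, Finset.sum_ite_eq'] using this
      · exact coeff_eq_zero_of_natDegree_lt (lt_of_lt_of_le (hsdeg k) hi)
    funext k
    have : s k = 0 := Polynomial.ext fun i => by simpa using hscoeff k i
    rw [hsdef] at this
    exact sub_eq_zero.mp this
  refine ⟨q0, ⟨hq0deg, fun z => (hmain z).symm⟩, ?_⟩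
  rintro y ⟨hy1, hy2⟩
  exact uniq y q0 hy1 hq0deg fun z => by rw [← hy2 z, hmain z]
end

section
/- Let p be a complex polynomial of degree d ≥ 1 with distinct roots λ_1, …, λ_d whose real and imaginary parts are all rational (i.e. λ_k ∈ ℚ(i)), and assume the leading coefficient of p lies in ℚ(i). Let n ≥ 0 and let a_{k,ν} ∈ ℚ(i) for 1 ≤ k ≤ d, 0 ≤ ν ≤ n. Let P be the unique Hermite interpolation polynomial of degree at most d(n+1) − 1 with P^{(ν)}(λ_k) = a_{k,ν}, and let q_1, …, q_d be the unique polynomials of degree at most n with P(z) = Σ_{k=1}^d δ_k(z) q_k(p(z)). Then all coefficients of each q_k have rational real and imaginary parts. -/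
open Polynomial

/-- `z ∈ ℚ(i)`: the real and imaginary parts of `z` are both rational. -/
def IsGaussianRational (z : ℂ) : Prop := ∃ a b : ℚ, z = (a : ℂ) + (b : ℂ) * Complex.I

namespace Stmt6Aux

set_option synthInstance.maxHeartbeats 400000

lemma gr_iff (z : ℂ) :
    IsGaussianRational z ↔ (∃ a : ℚ, z.re = a) ∧ (∃ b : ℚ, z.im = b) := by
  constructor
  · rintro ⟨a, b, rfl⟩
    exact ⟨⟨a, by simp⟩, ⟨b, by simp⟩⟩
  · rintro ⟨⟨a, ha⟩, ⟨b, hb⟩⟩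
    refine ⟨a, b, ?_⟩
    rw [Complex.ext_iff]
    constructor <;> simp [ha, hb]

noncomputable def K : Subfield ℂ where
  carrier := {z | IsGaussianRational z}
  zero_mem' := ⟨0, 0, by simp⟩
  one_mem' := ⟨1, 0, by simp⟩
  add_mem' := by
    rintro x y ⟨a, b, rfl⟩ ⟨a', b', rfl⟩
    exact ⟨a + a', b + b', by push_cast; ring⟩
  neg_mem' := by
    rintro x ⟨a, b, rfl⟩
    exact ⟨-a, -b, by push_cast; ring⟩
  mul_mem' := by
    rintro x y ⟨a, b, rfl⟩ ⟨a', b', rfl⟩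
    refine ⟨a * a' - b * b', a * b' + b * a', ?_⟩
    push_cast
    linear_combination ((b : ℂ) * (b' : ℂ)) * Complex.I_sq
  inv_mem' := by
    rintro x hx
    rw [Set.mem_setOf_eq, gr_iff] at hx ⊢
    obtain ⟨⟨a, ha⟩, ⟨b, hb⟩⟩ := hx
    rw [Complex.inv_re, Complex.inv_im, Complex.normSq_apply, ha, hb]
    exact ⟨⟨a / (a * a + b * b), by push_cast; ring⟩,
           ⟨-b / (a * a + b * b), by push_cast; ring⟩⟩

lemma mem_K {z : ℂ} : z ∈ K ↔ IsGaussianRational z := Iff.rfl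

lemma exists_pi : ∃ π : ℂ →+ ℂ,
    (∀ x, IsGaussianRational (π x)) ∧
    (∀ x, IsGaussianRational x → π x = x) ∧
    (∀ k x, IsGaussianRational k → π (k * x) = k * π x) := by
  classical
  let V : Submodule K ℂ := Submodule.span K {1}
  have hmem : ∀ x : ℂ, x ∈ V ↔ IsGaussianRational x := by
    intro x
    rw [Submodule.mem_span_singleton]
    constructor
    · rintro ⟨k, rfl⟩
      have : (k : K) • (1 : ℂ) = (k : ℂ) := by
        rw [Subfield.smul_def, smul_eq_mul, mul_one]
      rw [this]
      exact k.2
    · intro hx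
      exact ⟨⟨x, hx⟩, by rw [Subfield.smul_def, smul_eq_mul, mul_one]⟩
  obtain ⟨W, hW⟩ := Submodule.exists_isCompl V
  let pr := V.projectionOnto W hW
  refine ⟨AddMonoidHom.mk' (fun x => (pr x : ℂ)) (by intro a b; simp), ?_, ?_, ?_⟩
  · intro x
    exact (hmem _).mp (pr x).2
  · intro x hx
    exact congrArg (Subtype.val)
      (Submodule.projectionOnto_apply_left hW ⟨x, (hmem x).mpr hx⟩)
  · intro k x hk
    have h1 : k * x = (⟨k, hk⟩ : K) • x := by
      rw [Subfield.smul_def, smul_eq_mul]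
    show (pr (k * x) : ℂ) = k * (pr x : ℂ)
    rw [h1, map_smul, Submodule.coe_smul, Subfield.smul_def, smul_eq_mul]

/-- coefficients are Gaussian rational -/
def GRp (f : ℂ[X]) : Prop := ∀ j, IsGaussianRational (f.coeff j)

lemma grp_iff_lifts {f : ℂ[X]} : GRp f ↔ f ∈ lifts (K.subtype) := by
  rw [lifts_iff_coeff_lifts]
  refine forall_congr' fun n => ?_
  constructor
  · intro h; exact ⟨⟨_, mem_K.mpr h⟩, rfl⟩
  · rintro ⟨k, hk⟩; rw [← hk]; exact mem_K.mp k.2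

lemma grp_mul {f g : ℂ[X]} (hf : GRp f) (hg : GRp g) : GRp (f * g) :=
  grp_iff_lifts.mpr (mul_mem (grp_iff_lifts.mp hf) (grp_iff_lifts.mp hg))

lemma grp_pow {f : ℂ[X]} (hf : GRp f) (m : ℕ) : GRp (f ^ m) :=
  grp_iff_lifts.mpr (pow_mem (grp_iff_lifts.mp hf) m)

lemma grp_C {a : ℂ} (ha : IsGaussianRational a) : GRp (C a) := by
  intro j
  rw [coeff_C]
  split
  · exact ha
  · exact mem_K.mp K.zero_mem

lemma grp_X_sub_C {a : ℂ} (ha : IsGaussianRational a) : GRp (X - C a) := by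
  intro j
  rw [coeff_sub, coeff_X, coeff_C]
  have h0 := mem_K.mp K.zero_mem
  have h1 := mem_K.mp K.one_mem
  split <;> split <;>
    first
      | exact mem_K.mp (K.sub_mem (mem_K.mpr h1) (mem_K.mpr ha))
      | exact mem_K.mp (K.sub_mem (mem_K.mpr h1) (mem_K.mpr h0))
      | exact mem_K.mp (K.sub_mem (mem_K.mpr h0) (mem_K.mpr ha))
      | exact mem_K.mp (K.sub_mem (mem_K.mpr h0) (mem_K.mpr h0))

lemma grp_prod {ι : Type*} {s : Finset ι} {f : ι → ℂ[X]} (h : ∀ i ∈ s, GRp (f i)) :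
    GRp (∏ i ∈ s, f i) :=
  grp_iff_lifts.mpr (prod_mem fun i hi => grp_iff_lifts.mp (h i hi))

/-- apply `π` to the coefficients of a polynomial -/
noncomputable def phat (π : ℂ →+ ℂ) (f : ℂ[X]) : ℂ[X] :=
  ⟨AddMonoidAlgebra.ofCoeff (f.toFinsupp.coeff.mapRange π π.map_zero)⟩

lemma coeff_phat (π : ℂ →+ ℂ) (f : ℂ[X]) (j : ℕ) :
    (phat π f).coeff j = π (f.coeff j) := by
  rcases f with ⟨f⟩
  simp [phat, coeff_ofFinsupp, Finsupp.mapRange_apply]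

lemma phat_sum (π : ℂ →+ ℂ) {ι : Type*} (s : Finset ι) (g : ι → ℂ[X]) :
    phat π (∑ i ∈ s, g i) = ∑ i ∈ s, phat π (g i) := by
  apply Polynomial.ext; intro j
  simp [coeff_phat, finset_sum_coeff, map_sum]

lemma phat_mul_left (π : ℂ →+ ℂ)
    (hs : ∀ k x, IsGaussianRational k → π (k * x) = k * π x)
    {f : ℂ[X]} (hf : GRp f) (g : ℂ[X]) :
    phat π (f * g) = f * phat π g := by
  apply Polynomial.ext; intro m
  simp only [coeff_phat, coeff_mul, map_sum]
  exact Finset.sum_congr rfl fun x _ => by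
    rw [hs _ _ (hf x.1)]

lemma phat_natDegree_le (π : ℂ →+ ℂ) (f : ℂ[X]) :
    (phat π f).natDegree ≤ f.natDegree := by
  apply natDegree_le_iff_coeff_eq_zero.mpr
  intro m hm
  rw [coeff_phat, coeff_eq_zero_of_natDegree_lt hm, map_zero]

lemma phat_degree_le (π : ℂ →+ ℂ) (f : ℂ[X]) :
    (phat π f).degree ≤ f.degree := by
  by_cases hf : f = 0
  · have : phat π f = 0 := by
      apply Polynomial.ext; intro j; simp [coeff_phat, hf]
    rw [this, hf]
  · refine (degree_le_iff_coeff_zero _ _).mpr fun m hm => ?_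
    rw [coeff_phat, coeff_eq_zero_of_degree_lt hm, map_zero]

lemma phat_eval (π : ℂ →+ ℂ)
    (hs : ∀ k x, IsGaussianRational k → π (k * x) = k * π x)
    {lam : ℂ} (hlam : IsGaussianRational lam) (f : ℂ[X]) :
    (phat π f).eval lam = π (f.eval lam) := by
  rw [eval_eq_sum_range' (Nat.lt_succ_of_le (phat_natDegree_le π f)) lam,
      eval_eq_sum_range' (Nat.lt_succ_self _) lam, map_sum]
  refine Finset.sum_congr rfl fun i _ => ?_
  have hpow : IsGaussianRational (lam ^ i) := mem_K.mp (pow_mem (mem_K.mpr hlam) i)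
  rw [coeff_phat, mul_comm (f.coeff i), hs _ _ hpow, mul_comm]

lemma phat_C_mul (π : ℂ →+ ℂ)
    (hs : ∀ k x, IsGaussianRational k → π (k * x) = k * π x)
    {g : ℂ[X]} (hg : GRp g) (a : ℂ) :
    phat π (C a * g) = C (π a) * g := by
  apply Polynomial.ext; intro m
  rw [coeff_phat, coeff_C_mul, coeff_C_mul, mul_comm a, hs _ _ (hg m), mul_comm]

lemma phat_comp (π : ℂ →+ ℂ)
    (hs : ∀ k x, IsGaussianRational k → π (k * x) = k * π x)
    {p : ℂ[X]} (hp : GRp p) (f : ℂ[X]) :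
    phat π (f.comp p) = (phat π f).comp p := by
  have h1 : f.comp p = ∑ i ∈ Finset.range (f.natDegree + 1), C (f.coeff i) * p ^ i := by
    rw [comp, eval₂_eq_sum_range' C (Nat.lt_succ_self _) p]
  have h2 : (phat π f).comp p
      = ∑ i ∈ Finset.range (f.natDegree + 1), C (π (f.coeff i)) * p ^ i := by
    rw [comp, eval₂_eq_sum_range' C (Nat.lt_succ_of_le (phat_natDegree_le π f)) p]
    exact Finset.sum_congr rfl fun i _ => by rw [coeff_phat]
  rw [h1, phat_sum, h2]
  exact Finset.sum_congr rfl fun i _ => phat_C_mul π hs (grp_pow hp i) _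

lemma phat_derivative (π : ℂ →+ ℂ)
    (hs : ∀ k x, IsGaussianRational k → π (k * x) = k * π x)
    (f : ℂ[X]) :
    phat π (derivative f) = derivative (phat π f) := by
  apply Polynomial.ext; intro m
  rw [coeff_phat, coeff_derivative, coeff_derivative, coeff_phat]
  have hn : IsGaussianRational ((m : ℂ) + 1) :=
    mem_K.mp (K.add_mem (natCast_mem K m) K.one_mem)
  rw [mul_comm _ ((m : ℂ) + 1), hs _ _ hn, mul_comm]

lemma phat_iterate_derivative (π : ℂ →+ ℂ)
    (hs : ∀ k x, IsGaussianRational k → π (k * x) = k * π x)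
    (f : ℂ[X]) (ν : ℕ) :
    (⇑(derivative (R := ℂ)))^[ν] (phat π f) = phat π ((⇑(derivative (R := ℂ)))^[ν] f) := by
  induction ν with
  | zero => rfl
  | succ m ih => rw [Function.iterate_succ_apply', Function.iterate_succ_apply', ih,
      phat_derivative π hs]

/-- cancellation: the multicentric representation of 0 is trivial. -/
lemma cancel {d : ℕ} (lam : Fin d → ℂ) (δ : Fin d → ℂ[X])
    (hδval : ∀ k j, (δ k).eval (lam j) = if k = j then 1 else 0)
    (p : ℂ[X]) (hp0 : p ≠ 0) (hproot : ∀ k, p.eval (lam k) = 0) :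
    ∀ (n : ℕ) (r : Fin d → ℂ[X]), (∀ k, (r k).natDegree ≤ n) →
      (∑ k, δ k * (r k).comp p = 0) → ∀ k, r k = 0 := by
  have key : ∀ (r : Fin d → ℂ[X]), (∑ k, δ k * (r k).comp p = 0) →
      ∀ k, (r k).coeff 0 = 0 := by
    intro r hsum k
    have h := congrArg (eval (lam k)) hsum
    simp only [eval_finset_sum, eval_mul, eval_comp, hδval, hproot, eval_zero,
      ite_mul, one_mul, zero_mul, Finset.sum_ite_eq, Finset.sum_ite_eq',
      Finset.mem_univ, if_true] at h
    rw [coeff_zero_eq_eval_zero]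
    exact h
  intro n
  induction n with
  | zero =>
    intro r hdeg hsum k
    have h0 := key r hsum k
    rw [eq_C_of_natDegree_le_zero (hdeg k), h0, map_zero]
  | succ m ih =>
    intro r hdeg hsum k
    have h0 := key r hsum
    have hXr : ∀ j, r j = X * (r j).divX := by
      intro j
      conv_lhs => rw [← X_mul_divX_add (r j)]
      rw [h0 j, map_zero, add_zero]
    have hsum' : p * ∑ j, δ j * ((r j).divX.comp p) = 0 := by
      rw [Finset.mul_sum, ← hsum]
      refine Finset.sum_congr rfl fun j _ => ?_
      conv_rhs => rw [hXr j]
      rw [mul_comp, X_comp]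
      ring
    have hsum'' : ∑ j, δ j * ((r j).divX.comp p) = 0 :=
      (mul_eq_zero.mp hsum').resolve_left hp0
    have hdeg' : ∀ j, (r j).divX.natDegree ≤ m := by
      intro j
      have h1 := hdeg j
      rw [natDegree_divX_eq_natDegree_tsub_one]
      omega
    have hz := ih (fun j => (r j).divX) hdeg' hsum''
    have hzk : (r k).divX = 0 := hz k
    rw [hXr k, hzk, mul_zero]

end Stmt6Aux

/-- If the roots `λ_k` of `p`, its leading coefficient, and the Hermite data
`a_{k,ν}` all lie in `ℚ(i)`, then the coefficients of the polynomials `q_k` in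
the truncated multicentric representation `P(z) = Σ_k δ_k(z) q_k(p(z))` of the
Hermite interpolation polynomial `P` all lie in `ℚ(i)`. -/
theorem stmt6 (d n : ℕ) (hd : 1 ≤ d) (c : ℂ) (hc : c ≠ 0)
    (hcQ : IsGaussianRational c)
    (lam : Fin d → ℂ) (hlam : Function.Injective lam)
    (hlamQ : ∀ k, IsGaussianRational (lam k))
    (p : ℂ[X]) (hp : p = C c * ∏ k : Fin d, (X - C (lam k)))
    (δ : Fin d → ℂ[X])
    (hδdeg : ∀ k, (δ k).degree < (d : ℕ))
    (hδval : ∀ k j, (δ k).eval (lam j) = if k = j then 1 else 0)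
    (a : Fin d → Fin (n + 1) → ℂ) (haQ : ∀ k ν, IsGaussianRational (a k ν))
    (P : ℂ[X]) (hPdeg : P.degree < (d * (n + 1) : ℕ))
    (hPval : ∀ (k : Fin d) (ν : Fin (n + 1)),
      ((⇑(Polynomial.derivative (R := ℂ)))^[(ν : ℕ)] P).eval (lam k) = a k ν)
    (q : Fin d → ℂ[X]) (hqdeg : ∀ k, (q k).degree ≤ (n : ℕ))
    (hq : ∀ z : ℂ, P.eval z = ∑ k : Fin d, (δ k).eval z * (q k).eval (p.eval z)) :
    ∀ (k : Fin d) (j : ℕ), IsGaussianRational ((q k).coeff j) := by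
  classical
  obtain ⟨π, hGR, hfix, hs⟩ := Stmt6Aux.exists_pi
  have hqP : P = ∑ k, δ k * ((q k).comp p) := by
    refine Polynomial.funext fun z => ?_
    rw [hq z, eval_finset_sum]
    exact Finset.sum_congr rfl fun k _ => by rw [eval_mul, eval_comp]
  have hp0 : p ≠ 0 := by
    rw [hp]
    refine mul_ne_zero (by simpa using hc) ?_
    exact (monic_prod_of_monic _ _ fun k _ => monic_X_sub_C _).ne_zero
  have hproot : ∀ k, p.eval (lam k) = 0 := by
    intro k
    rw [hp, eval_mul, eval_prod]
    rw [Finset.prod_eq_zero (Finset.mem_univ k) (by simp), mul_zero]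
  have hpK : Stmt6Aux.GRp p := by
    rw [hp]
    exact Stmt6Aux.grp_mul (Stmt6Aux.grp_C hcQ)
      (Stmt6Aux.grp_prod fun k _ => Stmt6Aux.grp_X_sub_C (hlamQ k))
  -- δ k is the Lagrange basis polynomial, which has Gaussian rational coefficients
  have hδK : ∀ k, Stmt6Aux.GRp (δ k) := by
    intro k
    set s := Finset.univ.erase k with hsdef
    set u := (∏ j ∈ s, (lam k - lam j))⁻¹ with hudef
    have huK : IsGaussianRational u :=
      Stmt6Aux.mem_K.mp (Stmt6Aux.K.inv_mem (prod_mem fun j _ =>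
        Stmt6Aux.K.sub_mem (Stmt6Aux.mem_K.mpr (hlamQ k)) (Stmt6Aux.mem_K.mpr (hlamQ j))))
    set L : ℂ[X] := C u * ∏ j ∈ s, (X - C (lam j)) with hLdef
    have hLK : Stmt6Aux.GRp L := Stmt6Aux.grp_mul (Stmt6Aux.grp_C huK)
      (Stmt6Aux.grp_prod fun j _ => Stmt6Aux.grp_X_sub_C (hlamQ j))
    have hcards : s.card = d - 1 := by
      rw [hsdef, Finset.card_erase_of_mem (Finset.mem_univ k), Finset.card_univ,
        Fintype.card_fin]
    have hLdeg : L.natDegree ≤ d - 1 := by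
      calc L.natDegree ≤ (C u).natDegree + (∏ j ∈ s, (X - C (lam j))).natDegree :=
            natDegree_mul_le
        _ ≤ d - 1 := by
            rw [natDegree_C, zero_add, natDegree_prod _ _ fun j _ => X_sub_C_ne_zero _]
            simp [natDegree_X_sub_C, hcards]
    have hδdeg' : (δ k).natDegree < d := by
      rcases eq_or_ne (δ k) 0 with h | h
      · simpa [h] using Nat.lt_of_lt_of_le Nat.zero_lt_one hd
      · exact (natDegree_lt_iff_degree_lt h).mpr (by simpa using hδdeg k)
    have hLeval : ∀ j, L.eval (lam j) = if k = j then 1 else 0 := by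
      intro j
      rw [hLdef, eval_mul, eval_C, eval_prod]
      by_cases hjk : k = j
      · subst hjk
        rw [if_pos rfl]
        have hne : (∏ j ∈ s, (lam k - lam j)) ≠ 0 := by
          rw [Finset.prod_ne_zero_iff]
          intro i hi
          exact sub_ne_zero.mpr fun hle => (Finset.mem_erase.mp hi).1 (hlam hle.symm)
        simp only [eval_sub, eval_X, eval_C]
        rw [hudef, inv_mul_cancel₀ hne]
      · rw [if_neg hjk]
        have hjs : j ∈ s := Finset.mem_erase.mpr ⟨fun h => hjk h.symm, Finset.mem_univ j⟩
        rw [Finset.prod_eq_zero hjs (by simp), mul_zero]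
    have hLδ : δ k = L := by
      have h1 : (δ k - L).natDegree < Fintype.card (Fin d) := by
        rw [Fintype.card_fin]
        exact lt_of_le_of_lt (natDegree_sub_le _ _) (max_lt hδdeg' (by omega))
      have h2 : ∀ i, (δ k - L).eval (lam i) = 0 := by
        intro i
        rw [eval_sub, hδval k i, hLeval i, sub_self]
      exact sub_eq_zero.mp (eq_zero_of_natDegree_lt_card_of_eval_eq_zero _ hlam h2 h1)
    rw [hLδ]; exact hLK
  have hP' : Stmt6Aux.phat π P = ∑ k, δ k * ((Stmt6Aux.phat π (q k)).comp p) := by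
    rw [hqP, Stmt6Aux.phat_sum]
    exact Finset.sum_congr rfl fun k _ => by
      rw [Stmt6Aux.phat_mul_left π hs (hδK k), Stmt6Aux.phat_comp π hs hpK]
  set D : ℂ[X] := P - Stmt6Aux.phat π P with hDdef
  have hDval : ∀ (k : Fin d) (ν : ℕ), ν ≤ n →
      ((⇑(derivative (R := ℂ)))^[ν] D).eval (lam k) = 0 := by
    intro k ν hν
    have hν' : ν < n + 1 := by omega
    have h1 := hPval k ⟨ν, hν'⟩
    rw [hDdef, iterate_derivative_sub, eval_sub, Stmt6Aux.phat_iterate_derivative π hs,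
        Stmt6Aux.phat_eval π hs (hlamQ k)]
    rw [h1, hfix _ (haQ k ⟨ν, hν'⟩), sub_self]
  have hDdeg : D.degree < ((d * (n + 1) : ℕ) : WithBot ℕ) := by
    refine lt_of_le_of_lt (degree_sub_le _ _) (max_lt hPdeg ?_)
    exact lt_of_le_of_lt (Stmt6Aux.phat_degree_le π P) hPdeg
  have hD0 : D = 0 := by
    by_contra hD0
    set G : ℂ[X] := ∏ k : Fin d, (X - C (lam k)) ^ (n + 1) with hGdef
    have hGmonic : G.Monic := monic_prod_of_monic _ _ fun k _ => (monic_X_sub_C _).pow _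
    have hGdeg : G.natDegree = d * (n + 1) := by
      rw [hGdef, natDegree_prod _ _ fun k _ => ((monic_X_sub_C (lam k)).pow _).ne_zero]
      simp [natDegree_pow, natDegree_X_sub_C, mul_comm]
    have hdvd : G ∣ D := by
      rw [hGdef]
      refine Finset.prod_dvd_of_coprime ?_ ?_
      · intro i _ j _ hij
        have hu : IsUnit (lam i - lam j) :=
          (sub_ne_zero.mpr fun h => hij (hlam h)).isUnit
        exact (isCoprime_X_sub_C_of_isUnit_sub hu).pow
      · intro k _
        have hmult : n < D.rootMultiplicity (lam k) :=
          (lt_rootMultiplicity_iff_isRoot_iterate_derivative hD0).mpr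
            fun m hm => hDval k m hm
        exact dvd_trans (pow_dvd_pow _ hmult) (pow_rootMultiplicity_dvd D _)
    have h2 : ((d * (n + 1) : ℕ) : WithBot ℕ) ≤ D.degree := by
      rw [← hGdeg, ← degree_eq_natDegree hGmonic.ne_zero]
      exact degree_le_of_dvd hdvd hD0
    exact absurd (lt_of_le_of_lt h2 hDdeg) (lt_irrefl _)
  have hsum0 : ∑ k, δ k * ((q k - Stmt6Aux.phat π (q k)).comp p) = 0 := by
    have hEq : ∑ k, δ k * ((q k - Stmt6Aux.phat π (q k)).comp p) = D := by
      rw [hDdef, hP']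
      conv_rhs => rw [hqP]
      rw [← Finset.sum_sub_distrib]
      exact Finset.sum_congr rfl fun k _ => by rw [sub_comp, mul_sub]
    rw [hEq, hD0]
  have hrdeg : ∀ k, (q k - Stmt6Aux.phat π (q k)).natDegree ≤ n := by
    intro k
    have h1 : (q k).natDegree ≤ n := natDegree_le_iff_degree_le.mpr (hqdeg k)
    have h2 : (Stmt6Aux.phat π (q k)).natDegree ≤ n :=
      le_trans (Stmt6Aux.phat_natDegree_le π _) h1
    exact le_trans (natDegree_sub_le _ _) (max_le h1 h2)
  have hr0 := Stmt6Aux.cancel lam δ hδval p hp0 hproot n _ hrdeg hsum0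
  intro k j
  have hqk : q k = Stmt6Aux.phat π (q k) := by
    have h := hr0 k
    rwa [sub_eq_zero] at h
  have hcoeff : (q k).coeff j = π ((q k).coeff j) := by
    conv_lhs => rw [hqk, Stmt6Aux.coeff_phat]
  rw [hcoeff]
  exact hGR _
end

section
/- Let p be a complex polynomial of degree d ≥ 1 with distinct roots λ_1, …, λ_d, δ_k the Lagrange basis polynomials, and r > 0. For k = 1, …, d let (α_{k,j})_{j≥0} be complex coefficients such that the power series f_k(w) = Σ_{j=0}^∞ α_{k,j} w^j converges for |w| < r, and define φ(z) = Σ_{k=1}^d δ_k(z) f_k(p(z)) on the open set {z : |p(z)| < r}. For n ≥ 0 define the polynomial P(z) = Σ_{k=1}^d δ_k(z) Σ_{j=0}^n α_{k,j} p(z)^j. Then deg P ≤ d(n+1) − 1 and P is the unique polynomial of degree at most d(n+1) − 1 satisfying P^{(ν)}(λ_k) = φ^{(ν)}(λ_k) for all k = 1, …, d and ν = 0, …, n, where φ^{(ν)}(λ_k) denotes the ν-th complex derivative of φ at λ_k (note p(λ_k) = 0, so φ is analytic near each λ_k). -/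
open Polynomial Topology Filter

private lemma polyAnalyticAt (q : ℂ[X]) (x : ℂ) : AnalyticAt ℂ (fun z => q.eval z) x :=
  q.differentiable.analyticAt x

private lemma analyticAt_deriv' {H : ℂ → ℂ} {a : ℂ} (h : AnalyticAt ℂ H a) :
    AnalyticAt ℂ (deriv H) a :=
  (AnalyticOnNhd.deriv (s := {z | AnalyticAt ℂ H z}) (fun _ hz => hz)) a h

private lemma iteratedDeriv_add_analytic (ν : ℕ) :
    ∀ {f g : ℂ → ℂ} {a : ℂ}, AnalyticAt ℂ f a → AnalyticAt ℂ g a →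
    iteratedDeriv ν (fun z => f z + g z) a = iteratedDeriv ν f a + iteratedDeriv ν g a := by
  induction ν with
  | zero => intro f g a _ _; simp
  | succ ν ih =>
    intro f g a hf hg
    rw [iteratedDeriv_succ', iteratedDeriv_succ' (f := f), iteratedDeriv_succ' (f := g)]
    have hev : deriv (fun z => f z + g z) =ᶠ[𝓝 a] fun z => deriv f z + deriv g z := by
      filter_upwards [hf.eventually_analyticAt, hg.eventually_analyticAt] with z h1 h2
      exact deriv_add h1.differentiableAt h2.differentiableAt
    rw [hev.iteratedDeriv_eq ν]
    exact ih (analyticAt_deriv' hf) (analyticAt_deriv' hg)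

private lemma iteratedDeriv_vanish (ν : ℕ) :
    ∀ (m : ℕ) {H : ℂ → ℂ} {a : ℂ}, AnalyticAt ℂ H a → ν < m →
    iteratedDeriv ν (fun z => (z - a) ^ m * H z) a = 0 := by
  induction ν with
  | zero =>
    intro m H a _ hm
    simp only [iteratedDeriv_zero, sub_self]
    rw [zero_pow (by omega), zero_mul]
  | succ ν ih =>
    intro m H a hH hm
    obtain ⟨m', rfl⟩ : ∃ m', m = m' + 1 := ⟨m - 1, by omega⟩
    rw [iteratedDeriv_succ']
    have hev : deriv (fun z => (z - a) ^ (m' + 1) * H z)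
        =ᶠ[𝓝 a] fun z => (z - a) ^ m' * (((m' : ℂ) + 1) * H z + (z - a) * deriv H z) := by
      filter_upwards [hH.eventually_analyticAt] with z hz
      have h1 : HasDerivAt (fun w : ℂ => (w - a) ^ (m' + 1))
          (((m' : ℂ) + 1) * (z - a) ^ m') z := by
        have := ((hasDerivAt_id z).sub_const a).fun_pow (m' + 1)
        simpa using this
      rw [deriv_fun_mul h1.differentiableAt hz.differentiableAt, h1.deriv]
      ring
    rw [hev.iteratedDeriv_eq ν]
    exact ih m' ((analyticAt_const.mul hH).add
      (((analyticAt_id.sub analyticAt_const).mul (analyticAt_deriv' hH))))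
      (Nat.lt_of_succ_lt_succ hm)

private lemma iteratedDeriv_polyeval (ν : ℕ) : ∀ (q : ℂ[X]),
    iteratedDeriv ν (fun z => q.eval z)
      = fun z => ((⇑(derivative (R := ℂ)))^[ν] q).eval z := by
  induction ν with
  | zero => intro q; simp
  | succ ν ih =>
    intro q
    rw [iteratedDeriv_succ']
    have h1 : deriv (fun z => q.eval z) = fun z => (derivative q).eval z :=
      funext fun z => q.deriv
    rw [h1, ih, Function.iterate_succ_apply]

private lemma inv_pow_mul_tail {x : ℂ} (hx : x ≠ 0) (a : ℂ) (m j : ℕ) :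
    (x ^ m)⁻¹ * (a * x ^ (j + m)) = a * x ^ j := by
  calc (x ^ m)⁻¹ * (a * x ^ (j + m)) = a * x ^ j * (x ^ m * (x ^ m)⁻¹) := by rw [pow_add]; ring
    _ = a * x ^ j := by rw [mul_inv_cancel₀ (pow_ne_zero _ hx), mul_one]

/-- The truncation of the multicentric representation is the Hermite interpolation
polynomial: if `φ(z) = Σ_k δ_k(z) f_k(p(z))` with `f_k(w) = Σ_j α_{k,j} w^j`
convergent for `‖w‖ < r`, then `P(z) = Σ_k δ_k(z) Σ_{j≤n} α_{k,j} p(z)^j` has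
degree at most `d(n+1) − 1` and is the unique polynomial of degree at most
`d(n+1) − 1` with `P^{(ν)}(λ_k) = φ^{(ν)}(λ_k)` for all `k` and `ν = 0, …, n`. -/
theorem stmt7 (d : ℕ) (hd : 1 ≤ d) (c : ℂ) (hc : c ≠ 0)
    (lam : Fin d → ℂ) (hlam : Function.Injective lam)
    (p : ℂ[X]) (hp : p = C c * ∏ k : Fin d, (X - C (lam k)))
    (δ : Fin d → ℂ[X])
    (hδdeg : ∀ k, (δ k).degree < (d : ℕ))
    (hδval : ∀ k j, (δ k).eval (lam j) = if k = j then 1 else 0)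
    (r : ℝ) (hr : 0 < r) (α : Fin d → ℕ → ℂ) (f : Fin d → ℂ → ℂ)
    (hf : ∀ (k : Fin d) (w : ℂ), ‖w‖ < r → HasSum (fun j : ℕ => α k j * w ^ j) (f k w))
    (φ : ℂ → ℂ)
    (hφ : ∀ z : ℂ, ‖p.eval z‖ < r → φ z = ∑ k : Fin d, (δ k).eval z * f k (p.eval z))
    (n : ℕ) (P : ℂ[X])
    (hP : P = ∑ k : Fin d, δ k * ∑ j ∈ Finset.range (n + 1), C (α k j) * p ^ j) :
    P.degree < (d * (n + 1) : ℕ) ∧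
    (∀ (k : Fin d) (ν : ℕ), ν ≤ n →
      ((⇑(Polynomial.derivative (R := ℂ)))^[ν] P).eval (lam k) =
        iteratedDeriv ν φ (lam k)) ∧
    (∀ Q : ℂ[X], Q.degree < (d * (n + 1) : ℕ) →
      (∀ (k : Fin d) (ν : ℕ), ν ≤ n →
        ((⇑(Polynomial.derivative (R := ℂ)))^[ν] Q).eval (lam k) =
          iteratedDeriv ν φ (lam k)) →
      Q = P) := by
  -- basic facts about `p`
  have proot : ∀ k, p.eval (lam k) = 0 := by
    intro k
    rw [hp]
    simp only [eval_mul, eval_C, eval_prod, eval_sub, eval_X]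
    rw [Finset.prod_eq_zero (Finset.mem_univ k) (by simp)]
    ring
  have hdegp : p.degree = (d : ℕ) := by
    rw [hp, degree_mul, degree_C hc, degree_prod]
    simp [degree_X_sub_C]
  -- degree bound on `P`
  have hdegP : P.degree < ((d * (n + 1) : ℕ) : WithBot ℕ) := by
    rw [hP]
    refine lt_of_le_of_lt (degree_sum_le _ _) ?_
    rw [Finset.sup_lt_iff (by exact_mod_cast WithBot.bot_lt_coe (d * (n + 1)))]
    intro k _
    have h2 : (∑ j ∈ Finset.range (n + 1), C (α k j) * p ^ j).degree
        ≤ ((d * n : ℕ) : WithBot ℕ) := by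
      refine le_trans (degree_sum_le _ _) ?_
      refine Finset.sup_le fun j hj => ?_
      refine le_trans (degree_mul_le _ _) ?_
      refine le_trans (add_le_add degree_C_le (degree_pow_le _ _)) ?_
      rw [hdegp, zero_add]
      have : j • ((d : ℕ) : WithBot ℕ) = ((j * d : ℕ) : WithBot ℕ) := by
        simp [nsmul_eq_mul]
      rw [this]
      exact_mod_cast (show j * d ≤ d * n by
        rw [Nat.mul_comm]; exact Nat.mul_le_mul_left d (by
          have := Finset.mem_range.mp hj; omega))
    calc (δ k * ∑ j ∈ Finset.range (n + 1), C (α k j) * p ^ j).degree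
        ≤ (δ k).degree + (∑ j ∈ Finset.range (n + 1), C (α k j) * p ^ j).degree :=
          degree_mul_le _ _
      _ < ((d : ℕ) : WithBot ℕ) + ((d * n : ℕ) : WithBot ℕ) :=
          by
            rcases eq_or_ne (∑ j ∈ Finset.range (n + 1), C (α k j) * p ^ j).degree ⊥ with hb | hb
            · rw [hb, WithBot.add_bot, ← Nat.cast_add]; exact WithBot.bot_lt_coe _
            · exact WithBot.add_lt_add_of_lt_of_le hb (hδdeg k) h2
      _ = ((d * (n + 1) : ℕ) : WithBot ℕ) := by
          rw [← Nat.cast_add]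
          congr 1
          ring
  -- evaluation of `P`
  have evalP : ∀ z : ℂ, P.eval z
      = ∑ k : Fin d, (δ k).eval z * ∑ j ∈ Finset.range (n + 1), α k j * (p.eval z) ^ j := by
    intro z
    rw [hP]
    simp [eval_finset_sum, eval_mul, eval_pow]
  -- the tail functions g k
  set g : Fin d → ℂ → ℂ :=
    fun k => FormalMultilinearSeries.ofScalarsSum (E := ℂ) (fun j => α k (j + (n + 1))) with hg
  have hgsum : ∀ (k : Fin d) (w : ℂ), g k w = ∑' j : ℕ, α k (j + (n + 1)) * w ^ j := by
    intro k w
    rw [show g k w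
      = FormalMultilinearSeries.ofScalarsSum (E := ℂ) (fun j => α k (j + (n + 1))) w from rfl]
    rw [FormalMultilinearSeries.ofScalars_sum_eq]
    simp [smul_eq_mul]
  have hTail : ∀ (k : Fin d) (w : ℂ), ‖w‖ < r →
      HasSum (fun j : ℕ => α k (j + (n + 1)) * w ^ (j + (n + 1)))
        (f k w - ∑ j ∈ Finset.range (n + 1), α k j * w ^ j) := by
    intro k w hw
    refine (hasSum_nat_add_iff (f := fun j : ℕ => α k j * w ^ j) (n + 1)).mpr ?_
    rw [sub_add_cancel]
    exact hf k w hw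
  have hfdecomp : ∀ (k : Fin d) (w : ℂ), ‖w‖ < r →
      f k w = (∑ j ∈ Finset.range (n + 1), α k j * w ^ j) + w ^ (n + 1) * g k w := by
    intro k w hw
    rcases eq_or_ne w 0 with rfl | hw0
    · have h0 : HasSum (fun j : ℕ => α k j * (0 : ℂ) ^ j) (α k 0) := by
        have := hasSum_single (f := fun j : ℕ => α k j * (0 : ℂ) ^ j) 0
          (fun b hb => by simp [zero_pow hb])
        simpa using this
      have hf0 : f k 0 = α k 0 := ((hf k 0 (by simpa using hr)).unique h0)
      have hs0 : (∑ j ∈ Finset.range (n + 1), α k j * (0 : ℂ) ^ j) = α k 0 := by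
        rw [Finset.sum_eq_single_of_mem 0 (Finset.mem_range.mpr (by omega))
          (fun b _ hb => by simp [zero_pow hb])]
        simp
      rw [hf0, hs0]
      simp
    · have h1 := (hTail k w hw).mul_left ((w ^ (n + 1))⁻¹)
      have heq : (fun j : ℕ => (w ^ (n + 1))⁻¹ * (α k (j + (n + 1)) * w ^ (j + (n + 1))))
          = fun j : ℕ => α k (j + (n + 1)) * w ^ j := by
        funext j
        exact inv_pow_mul_tail hw0 _ _ _
      rw [heq] at h1
      have h3 : g k w = (w ^ (n + 1))⁻¹
          * (f k w - ∑ j ∈ Finset.range (n + 1), α k j * w ^ j) := by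
        rw [hgsum k w]
        exact h1.tsum_eq
      rw [h3]
      field_simp
      ring
  -- analyticity of g k at 0
  have hganal : ∀ k : Fin d, AnalyticAt ℂ (g k) 0 := by
    intro k
    set S := FormalMultilinearSeries.ofScalars ℂ (fun j => α k (j + (n + 1))) with hS
    have hw0 : ‖((r / 2 : ℝ) : ℂ)‖ < r := by
      rw [Complex.norm_real]
      rw [Real.norm_eq_abs, abs_of_pos (by linarith)]
      linarith
    have hne : ((r / 2 : ℝ) : ℂ) ≠ 0 := by
      simp only [ne_eq, Complex.ofReal_eq_zero]
      intro h; linarith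
    have hsum : Summable (fun j : ℕ => α k (j + (n + 1)) * ((r / 2 : ℝ) : ℂ) ^ j) := by
      have h1 := ((hTail k _ hw0).summable).mul_left ((((r / 2 : ℝ) : ℂ)) ^ (n + 1))⁻¹
      refine h1.congr fun j => ?_
      exact inv_pow_mul_tail hne _ _ _
    have htend : Filter.Tendsto (fun j : ℕ => ‖α k (j + (n + 1))‖ * (r / 2) ^ j)
        Filter.atTop (𝓝 0) := by
      have h2 := hsum.tendsto_atTop_zero.norm
      simp only [norm_mul, norm_pow, Complex.norm_real, Real.norm_eq_abs,
        abs_of_pos (by linarith : (0:ℝ) < r / 2), norm_zero] at h2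
      exact h2
    have hbig := htend.isBigO_one ℝ
    set t : NNReal := ⟨r / 2, by linarith⟩ with ht
    have hrad : ((t : NNReal) : ENNReal) ≤ S.radius := by
      refine S.le_radius_of_isBigO ?_
      refine Asymptotics.IsBigO.congr' hbig ?_ (by rfl)
      filter_upwards with j
      have hn1 : ‖S j‖ = ‖α k (j + (n + 1))‖ := by
        rw [hS]
        exact FormalMultilinearSeries.ofScalars_norm (𝕜 := ℂ) (E := ℂ)
          (fun j => α k (j + (n + 1))) j
      rw [hn1]
      rfl
    have hradpos : 0 < S.radius := by
      refine lt_of_lt_of_le ?_ hrad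
      exact_mod_cast (by positivity : (0 : ℝ) < r / 2)
    exact (S.hasFPowerSeriesOnBall hradpos).analyticAt
  -- the remainder function h
  set h : ℂ → ℂ := fun z => ∑ k : Fin d, (δ k).eval z * g k (p.eval z) with hhdef
  have hh : ∀ k0 : Fin d, AnalyticAt ℂ h (lam k0) := by
    intro k0
    refine Finset.analyticAt_fun_sum _ fun k _ => ?_
    refine (polyAnalyticAt (δ k) _).mul ?_
    have h1 : AnalyticAt ℂ (g k) ((fun z => p.eval z) (lam k0)) := by
      simp only []
      rw [proot k0]; exact hganal k
    have h2 := AnalyticAt.comp (𝕜 := ℂ) (g := g k) (f := fun z => p.eval z)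
      (x := lam k0) h1 (polyAnalyticAt p (lam k0))
    exact h2
  -- local decomposition of φ near each lam k
  have hφev : ∀ k0 : Fin d,
      φ =ᶠ[𝓝 (lam k0)] fun z => P.eval z + (p.eval z) ^ (n + 1) * h z := by
    intro k0
    have hUopen : IsOpen {z : ℂ | ‖p.eval z‖ < r} :=
      isOpen_lt (p.continuous.norm) continuous_const
    have hmem : lam k0 ∈ {z : ℂ | ‖p.eval z‖ < r} := by
      simp [proot k0, hr]
    filter_upwards [hUopen.mem_nhds hmem] with z hz
    rw [hφ z hz]
    have hfz : ∀ k : Fin d, f k (p.eval z)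
        = (∑ j ∈ Finset.range (n + 1), α k j * (p.eval z) ^ j)
          + (p.eval z) ^ (n + 1) * g k (p.eval z) := fun k => hfdecomp k _ hz
    calc ∑ k : Fin d, (δ k).eval z * f k (p.eval z)
        = ∑ k : Fin d, ((δ k).eval z * ∑ j ∈ Finset.range (n + 1), α k j * (p.eval z) ^ j
            + (p.eval z) ^ (n + 1) * ((δ k).eval z * g k (p.eval z))) := by
          refine Finset.sum_congr rfl fun k _ => ?_
          rw [hfz k]
          ring
      _ = P.eval z + (p.eval z) ^ (n + 1) * h z := by
          rw [Finset.sum_add_distrib, ← Finset.mul_sum, evalP z, hhdef]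
  -- the interpolation property
  have key : ∀ (k : Fin d) (ν : ℕ), ν ≤ n →
      ((⇑(Polynomial.derivative (R := ℂ)))^[ν] P).eval (lam k)
        = iteratedDeriv ν φ (lam k) := by
    intro k ν hν
    have e1 : iteratedDeriv ν φ (lam k)
        = iteratedDeriv ν (fun z => P.eval z + (p.eval z) ^ (n + 1) * h z) (lam k) :=
      (hφev k).iteratedDeriv_eq ν
    have hF : AnalyticAt ℂ (fun z => (p.eval z) ^ (n + 1) * h z) (lam k) :=
      ((polyAnalyticAt p _).pow _).mul (hh k)
    have e2 := iteratedDeriv_add_analytic ν (polyAnalyticAt P (lam k)) hF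
    have e3 : iteratedDeriv ν (fun z => (p.eval z) ^ (n + 1) * h z) (lam k) = 0 := by
      obtain ⟨q, hq⟩ : (X - C (lam k)) ∣ p := dvd_iff_isRoot.mpr (proot k)
      have hfun : (fun z => (p.eval z) ^ (n + 1) * h z)
          = fun z => (z - lam k) ^ (n + 1) * ((q.eval z) ^ (n + 1) * h z) := by
        funext z
        rw [hq, eval_mul, mul_pow]
        simp only [eval_sub, eval_X, eval_C]
        ring
      rw [hfun]
      exact iteratedDeriv_vanish ν (n + 1) (((polyAnalyticAt q _).pow _).mul (hh k))
        (by omega)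
    rw [e1, e2, e3, add_zero, iteratedDeriv_polyeval]
  refine ⟨hdegP, key, ?_⟩
  -- uniqueness
  intro Q hQdeg hQval
  have hroot : ∀ (k : Fin d) (ν : ℕ), ν ≤ n →
      ((⇑(Polynomial.derivative (R := ℂ)))^[ν] (Q - P)).IsRoot (lam k) := by
    intro k ν hν
    simp only [IsRoot, iterate_derivative_sub, eval_sub]
    rw [hQval k ν hν, key k ν hν]
    ring
  by_cases hR0 : Q - P = 0
  · exact sub_eq_zero.mp hR0
  · exfalso
    have hdvd : ∀ k : Fin d, (X - C (lam k)) ^ (n + 1) ∣ (Q - P) := by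
      intro k
      have hlt : n < rootMultiplicity (lam k) (Q - P) := by
        refine (lt_rootMultiplicity_iff_isRoot_iterate_derivative_of_mem_nonZeroDivisors
          hR0 ?_).mpr (fun m hm => hroot k m hm)
        exact mem_nonZeroDivisors_of_ne_zero
          (Nat.cast_ne_zero.mpr (Nat.factorial_ne_zero n))
      exact dvd_trans (pow_dvd_pow _ hlt) (pow_rootMultiplicity_dvd (Q - P) (lam k))
    have hprodvd : (∏ k : Fin d, (X - C (lam k)) ^ (n + 1)) ∣ (Q - P) := by
      refine Finset.prod_dvd_of_coprime ?_ fun k _ => hdvd k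
      intro a _ b hb hab
      exact ((pairwise_coprime_X_sub_C hlam hab).pow)
    have hdegprod : (∏ k : Fin d, (X - C (lam k)) ^ (n + 1)).degree
        = ((d * (n + 1) : ℕ) : WithBot ℕ) := by
      rw [degree_prod]
      have : ∀ k : Fin d, ((X - C (lam k)) ^ (n + 1)).degree = ((n + 1 : ℕ) : WithBot ℕ) := by
        intro k
        rw [degree_pow, degree_X_sub_C]
        simp [nsmul_eq_mul]
      rw [Finset.sum_congr rfl fun k _ => this k]
      rw [Finset.sum_const, Finset.card_univ, Fintype.card_fin]
      rw [nsmul_eq_mul]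
      exact_mod_cast rfl
    have : Q - P = 0 := by
      refine eq_zero_of_dvd_of_degree_lt hprodvd ?_
      rw [hdegprod]
      exact lt_of_le_of_lt (degree_sub_le Q P) (max_lt hQdeg hdegP)
    exact hR0 this
end

section
/- Let p be a complex polynomial of degree d ≥ 1 with distinct roots λ_1, …, λ_d and Lagrange basis polynomials δ_k. Let 0 < ρ₀ < ρ₁ < ρ, let C_k ≥ 0, and suppose for each k the coefficients satisfy |α_{k,j}| ≤ C_k·ρ^{−j} for all j ≥ 0, with f_k(w) = Σ_j α_{k,j} w^j. Let z, ẑ, ŵ ∈ ℂ satisfy: |p(z)| ≤ ρ₀; |δ_k(z) − δ_k(ẑ)| ≤ ε₀ and |δ_k(ẑ)| ≤ D for every k; |ŵ| ≤ ρ₁ and |p(z) − ŵ| ≤ ε₁. Then, writing φ(z) = Σ_{k=1}^d δ_k(z) f_k(p(z)) and φ̂ = Σ_{k=1}^d δ_k(ẑ) f_k(ŵ), one has |φ(z) − φ̂| ≤ (Σ_{k=1}^d C_k) · ( ρ/(ρ − ρ₀) · ε₀ + D · ρ/(ρ − ρ₁)² · ε₁ ). -/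
open Polynomial

lemma pow_sub_pow_norm_le (a b : ℂ) (r : ℝ) (hr : 0 ≤ r) (ha : ‖a‖ ≤ r) (hb : ‖b‖ ≤ r)
    (n : ℕ) : ‖a ^ n - b ^ n‖ ≤ (n : ℝ) * r ^ (n - 1) * ‖a - b‖ := by
  rw [← geom_sum₂_mul, norm_mul]
  gcongr ?_ * _
  calc ‖∑ i ∈ Finset.range n, a ^ i * b ^ (n - 1 - i)‖
      ≤ ∑ i ∈ Finset.range n, ‖a ^ i * b ^ (n - 1 - i)‖ := norm_sum_le _ _
    _ ≤ ∑ i ∈ Finset.range n, r ^ (n - 1) := by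
        apply Finset.sum_le_sum
        intro i hi
        rw [Finset.mem_range] at hi
        rw [norm_mul, norm_pow, norm_pow]
        calc ‖a‖ ^ i * ‖b‖ ^ (n - 1 - i) ≤ r ^ i * r ^ (n - 1 - i) := by
              gcongr <;> positivity
          _ = r ^ (n - 1) := by
              rw [← pow_add]
              congr 1
              omega
    _ = (n : ℝ) * r ^ (n - 1) := by
        rw [Finset.sum_const, Finset.card_range, nsmul_eq_mul]

/-- Total error bound for inexact evaluation of the multicentric representation:
if `‖p(z)‖ ≤ ρ₀`, the perturbed Lagrange values satisfy
`‖δ_k(z) − δ_k(ẑ)‖ ≤ ε₀`, `‖δ_k(ẑ)‖ ≤ D`, and the perturbed variable satisfies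
`‖ŵ‖ ≤ ρ₁`, `‖p(z) − ŵ‖ ≤ ε₁`, then
`‖φ(z) − φ̂‖ ≤ (Σ_k M_k)(ρ/(ρ−ρ₀)·ε₀ + D·ρ/(ρ−ρ₁)²·ε₁)`. -/
theorem stmt14 (d : ℕ) (hd : 1 ≤ d) (c : ℂ) (hc : c ≠ 0)
    (lam : Fin d → ℂ) (hlam : Function.Injective lam)
    (p : ℂ[X]) (hp : p = C c * ∏ k : Fin d, (X - C (lam k)))
    (δ : Fin d → ℂ[X])
    (hδdeg : ∀ k, (δ k).degree < (d : ℕ))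
    (hδval : ∀ k j, (δ k).eval (lam j) = if k = j then 1 else 0)
    (ρ₀ ρ₁ ρ : ℝ) (h0 : 0 < ρ₀) (h01 : ρ₀ < ρ₁) (h1 : ρ₁ < ρ)
    (M : Fin d → ℝ) (hM : ∀ k, 0 ≤ M k)
    (α : Fin d → ℕ → ℂ) (hα : ∀ (k : Fin d) (j : ℕ), ‖α k j‖ ≤ M k / ρ ^ j)
    (f : Fin d → ℂ → ℂ)
    (hf : ∀ (k : Fin d) (w : ℂ), ‖w‖ < ρ → HasSum (fun j : ℕ => α k j * w ^ j) (f k w))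
    (z zh wh : ℂ) (ε₀ ε₁ D : ℝ)
    (hz : ‖p.eval z‖ ≤ ρ₀)
    (hδ0 : ∀ k, ‖(δ k).eval z - (δ k).eval zh‖ ≤ ε₀)
    (hδD : ∀ k, ‖(δ k).eval zh‖ ≤ D)
    (hwh : ‖wh‖ ≤ ρ₁) (hw1 : ‖p.eval z - wh‖ ≤ ε₁) :
    ‖(∑ k : Fin d, (δ k).eval z * f k (p.eval z)) -
        ∑ k : Fin d, (δ k).eval zh * f k wh‖ ≤
      (∑ k : Fin d, M k) *
        (ρ / (ρ - ρ₀) * ε₀ + D * (ρ / (ρ - ρ₁) ^ 2) * ε₁) := by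
  have hρ : 0 < ρ := h0.trans (h01.trans h1)
  have hρ₁ : (0:ℝ) < ρ₁ := h0.trans h01
  have hρne : ρ ≠ 0 := hρ.ne'
  have hρ₁ne : ρ₁ ≠ 0 := hρ₁.ne'
  have hρ1 : 0 < ρ - ρ₁ := by linarith
  have hρ0 : 0 < ρ - ρ₀ := by linarith
  set w := p.eval z with hwdef
  have hwρ : ‖w‖ < ρ := lt_of_le_of_lt hz (by linarith)
  have hwhρ : ‖wh‖ < ρ := lt_of_le_of_lt hwh h1
  -- bounds on ε₀, ε₁, D
  have k0 : Fin d := ⟨0, hd⟩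
  have hε₀ : 0 ≤ ε₀ := (norm_nonneg _).trans (hδ0 k0)
  have hε₁ : 0 ≤ ε₁ := (norm_nonneg _).trans hw1
  have hD : 0 ≤ D := (norm_nonneg _).trans (hδD k0)
  -- bound on ‖f k w‖
  have hfw : ∀ k, ‖f k w‖ ≤ M k * (ρ / (ρ - ρ₀)) := by
    intro k
    have hr : ρ₀ / ρ < 1 := (div_lt_one hρ).mpr (by linarith)
    have hgeom : HasSum (fun j : ℕ => M k * (ρ₀ / ρ) ^ j) (M k * (ρ / (ρ - ρ₀))) := by
      have hg := (hasSum_geometric_of_lt_one (by positivity) hr).mul_left (M k)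
      have heq : M k * (1 - ρ₀ / ρ)⁻¹ = M k * (ρ / (ρ - ρ₀)) := by
        rw [one_sub_div hρ.ne', inv_div]
      rwa [heq] at hg
    rw [← (hf k w hwρ).tsum_eq]
    refine tsum_of_norm_bounded hgeom ?_
    intro j
    rw [norm_mul, norm_pow]
    calc ‖α k j‖ * ‖w‖ ^ j ≤ (M k / ρ ^ j) * ρ₀ ^ j :=
          mul_le_mul (hα k j) (pow_le_pow_left₀ (norm_nonneg _) hz j)
            (by positivity) (div_nonneg (hM k) (by positivity))
      _ = M k * (ρ₀ / ρ) ^ j := by rw [div_pow]; ring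
  -- bound on ‖f k w - f k wh‖
  have hfd : ∀ k, ‖f k w - f k wh‖ ≤ M k * (ρ / (ρ - ρ₁) ^ 2) * ε₁ := by
    intro k
    have hs : HasSum (fun j : ℕ => α k j * w ^ j - α k j * wh ^ j) (f k w - f k wh) :=
      (hf k w hwρ).sub (hf k wh hwhρ)
    have hr : ρ₁ / ρ < 1 := (div_lt_one hρ).mpr h1
    have hr0 : 0 ≤ ρ₁ / ρ := div_nonneg hρ₁.le hρ.le
    have hgeom : HasSum (fun j : ℕ => (M k * ε₁ / ρ₁) * ((j : ℝ) * (ρ₁ / ρ) ^ j))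
        (M k * (ρ / (ρ - ρ₁) ^ 2) * ε₁) := by
      have hg : HasSum (fun j : ℕ => (j : ℝ) * (ρ₁ / ρ) ^ j)
          ((ρ₁ / ρ) / (1 - ρ₁ / ρ) ^ 2) :=
        hasSum_coe_mul_geometric_of_norm_lt_one (by rwa [Real.norm_eq_abs, abs_of_nonneg hr0])
      have hg2 := hg.mul_left (M k * ε₁ / ρ₁)
      have heq : M k * ε₁ / ρ₁ * (ρ₁ / ρ / (1 - ρ₁ / ρ) ^ 2) = M k * (ρ / (ρ - ρ₁) ^ 2) * ε₁ := by
        have hne3 : ρ - ρ₁ ≠ 0 := hρ1.ne'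
        rw [one_sub_div hρne]
        field_simp
      rwa [heq] at hg2
    rw [← hs.tsum_eq]
    refine tsum_of_norm_bounded hgeom ?_
    intro j
    rw [← mul_sub, norm_mul]
    calc ‖α k j‖ * ‖w ^ j - wh ^ j‖
        ≤ (M k / ρ ^ j) * ((j : ℝ) * ρ₁ ^ (j - 1) * ε₁) := by
          have hb : ‖w ^ j - wh ^ j‖ ≤ (j : ℝ) * ρ₁ ^ (j - 1) * ε₁ :=
            calc ‖w ^ j - wh ^ j‖ ≤ (j : ℝ) * ρ₁ ^ (j - 1) * ‖w - wh‖ :=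
                  pow_sub_pow_norm_le w wh ρ₁ (by linarith) (by linarith) hwh j
              _ ≤ (j : ℝ) * ρ₁ ^ (j - 1) * ε₁ := by
                  have hc : (0:ℝ) ≤ (j : ℝ) * ρ₁ ^ (j - 1) := by positivity
                  exact mul_le_mul_of_nonneg_left hw1 hc
          exact mul_le_mul (hα k j) hb (norm_nonneg _) (div_nonneg (hM k) (by positivity))
      _ = (M k * ε₁ / ρ₁) * ((j : ℝ) * (ρ₁ / ρ) ^ j) := by
          rcases Nat.eq_zero_or_pos j with hj | hj
          · subst hj; simp
          · have h01' : (0:ℝ) < ρ₁ := h0.trans h01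
            have : ρ₁ ^ (j - 1) = ρ₁ ^ j / ρ₁ := by
              rw [eq_div_iff (ne_of_gt h01'), ← pow_succ]
              congr 1
              omega
            rw [this, div_pow]
            field_simp
  -- combine
  calc ‖(∑ k : Fin d, (δ k).eval z * f k w) - ∑ k : Fin d, (δ k).eval zh * f k wh‖
      = ‖∑ k : Fin d, ((δ k).eval z * f k w - (δ k).eval zh * f k wh)‖ := by
        rw [Finset.sum_sub_distrib]
    _ ≤ ∑ k : Fin d, ‖(δ k).eval z * f k w - (δ k).eval zh * f k wh‖ := norm_sum_le _ _
    _ ≤ ∑ k : Fin d, M k * (ρ / (ρ - ρ₀) * ε₀ + D * (ρ / (ρ - ρ₁) ^ 2) * ε₁) := by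
        apply Finset.sum_le_sum
        intro k _
        have hsplit : (δ k).eval z * f k w - (δ k).eval zh * f k wh
            = ((δ k).eval z - (δ k).eval zh) * f k w + (δ k).eval zh * (f k w - f k wh) := by
          ring
        rw [hsplit]
        calc ‖((δ k).eval z - (δ k).eval zh) * f k w + (δ k).eval zh * (f k w - f k wh)‖
            ≤ ‖((δ k).eval z - (δ k).eval zh) * f k w‖ +
              ‖(δ k).eval zh * (f k w - f k wh)‖ := norm_add_le _ _
          _ = ‖(δ k).eval z - (δ k).eval zh‖ * ‖f k w‖ +
              ‖(δ k).eval zh‖ * ‖f k w - f k wh‖ := by rw [norm_mul, norm_mul]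
          _ ≤ ε₀ * (M k * (ρ / (ρ - ρ₀))) + D * (M k * (ρ / (ρ - ρ₁) ^ 2) * ε₁) :=
              add_le_add
                (mul_le_mul (hδ0 k) (hfw k) (norm_nonneg _) hε₀)
                (mul_le_mul (hδD k) (hfd k) (norm_nonneg _) hD)
          _ = M k * (ρ / (ρ - ρ₀) * ε₀ + D * (ρ / (ρ - ρ₁) ^ 2) * ε₁) := by ring
    _ = (∑ k : Fin d, M k) * (ρ / (ρ - ρ₀) * ε₀ + D * (ρ / (ρ - ρ₁) ^ 2) * ε₁) := by
        rw [← Finset.sum_mul]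
end
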